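/- For every λ ≥ −1/2 and every n ∈ ℕ there is a constant C = C(λ,n) such that the n-th derivative of the normalized Bessel function satisfies |j_λ^{(n)}(t)| ≤ C·(1+t)^{−(λ+1/2)} for all t ≥ 0. -/

import Mathlib

/-!
Write `j_λ(t) = F_λ(-t²/4)` with the entire series `F_λ(x) = Γ(λ+1) ∑ xᵏ / (k! Γ(k+λ+1))`
(`besselSeries`).
Termwise differentiation gives `j_λ' = -t j_{λ+1} / (2(λ+1))`, and comparing coefficients gives a
contiguous relation between `j_λ`, `j_{λ+1}` and `j_{λ+2}`. Together they say that the Liouville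
transform `u = t^{λ+1/2} j_λ` solves `u'' = (q/t² - 1) u` with `q = (λ+1/2)(λ-1/2)`. For such an
equation the energy `(u² + u'²) e^{|q|/t}` is nonincreasing on `[1, ∞)`, so `u` is bounded there:
this is the decay `j_λ(t) = O((1+t)^{-(λ+1/2)})`. By Leibniz' rule, `j_λ^{(n+1)}` is a combination
of `t j_{λ+1}^{(n)}` and `j_{λ+1}^{(n-1)}`, and an induction on `n` that raises `λ` by one at each
step bounds all derivatives.
-/

noncomputable section

/-- The normalized Bessel function
`j_λ(t) = Γ(λ+1) ∑_{n=0}^∞ (−1)^n (t/2)^{2n}/(n! Γ(n+λ+1))`. -/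
def besselJNorm (lam : ℝ) (t : ℝ) : ℝ :=
  Real.Gamma (lam + 1) *
    ∑' n : ℕ, (-1 : ℝ) ^ n * (t / 2) ^ (2 * n) / (Nat.factorial n * Real.Gamma (n + lam + 1))

open Filter Topology Set Asymptotics FormalMultilinearSeries

namespace FormalMultilinearSeries

variable {𝕜 : Type*} [NontriviallyNormedField 𝕜] [CompleteSpace 𝕜] {c : ℕ → 𝕜}

theorem hasFPowerSeriesOnBall_ofScalarsSum (hc : (ofScalars 𝕜 c).radius = ⊤) :
    HasFPowerSeriesOnBall (ofScalarsSum c) (ofScalars 𝕜 c) 0 ⊤ :=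
  hc ▸ (ofScalars 𝕜 c).hasFPowerSeriesOnBall (by simp [hc])

theorem hasDerivAt_ofScalarsSum (hc : (ofScalars 𝕜 c).radius = ⊤) (x : 𝕜) :
    HasDerivAt (ofScalarsSum c) (ofScalarsSum (fun n => (n + 1) * c (n + 1)) x) x := by
  have hp := hasFPowerSeriesOnBall_ofScalarsSum hc
  have hderiv :=
    (hp.fderiv.hasSum (y := x) (by simp)).mapL (ContinuousLinearMap.apply 𝕜 𝕜 1)
  simp only [zero_add, ContinuousLinearMap.apply_apply, fderiv_apply_one_eq_deriv,
    apply_eq_pow_smul_coeff, _root_.smul_apply, derivSeries_coeff_one,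
    coeff_ofScalars] at hderiv
  refine (hp.analyticAt_of_mem (by simp)).differentiableAt.hasDerivAt.congr_deriv ?_
  rw [ofScalars_sum_eq, ← hderiv.tsum_eq]
  refine tsum_congr fun n => ?_
  simp only [nsmul_eq_mul, smul_eq_mul, Nat.cast_add, Nat.cast_one]
  ring

end FormalMultilinearSeries

theorem iteratedDeriv_fun_id_mul {𝕜 : Type*} [NontriviallyNormedField 𝕜] {f : 𝕜 → 𝕜} {n : ℕ}
    (hf : ContDiff 𝕜 n f) (x : 𝕜) :
    iteratedDeriv n (fun y => y * f y) x =
      x * iteratedDeriv n f x + n * iteratedDeriv (n - 1) f x := by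
  rw [iteratedDeriv_fun_mul (f := fun y => y) contDiffAt_fun_id hf.contDiffAt,
    Finset.sum_range_succ', Finset.sum_eq_single 0]
  · simp only [zero_add, Nat.choose_one_right, iteratedDeriv_fun_id, one_ne_zero, ↓reduceIte,
      mul_one, Nat.choose_zero_right, Nat.cast_one, one_mul, tsub_zero]
    ring
  · intro i _ hi
    simp [iteratedDeriv_fun_id, hi]
  · intro h
    obtain rfl : n = 0 := by simpa using h
    simp

theorem sq_le_of_perturbed_oscillator {u v : ℝ → ℝ} {q a : ℝ} (ha : 0 < a)
    (hu : ∀ t, a ≤ t → HasDerivAt u (v t) t)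
    (hv : ∀ t, a ≤ t → HasDerivAt v ((q / t ^ 2 - 1) * u t) t) {t : ℝ} (ht : a ≤ t) :
    u t ^ 2 ≤ (u a ^ 2 + v a ^ 2) * Real.exp (|q| / a) := by
  set F : ℝ → ℝ := fun s => (u s ^ 2 + v s ^ 2) * Real.exp (|q| / s)
  have hF : ∀ s, a ≤ s → HasDerivAt F
      (Real.exp (|q| / s) / s ^ 2 * (2 * q * (u s * v s) - |q| * (u s ^ 2 + v s ^ 2))) s := by
    intro s hs
    have hs₀ : s ≠ 0 := (ha.trans_le hs).ne'
    have hexp : HasDerivAt (fun s => Real.exp (|q| / s))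
        (Real.exp (|q| / s) * (|q| * -(s ^ 2)⁻¹)) s := by
      simpa only [div_eq_mul_inv] using ((hasDerivAt_inv hs₀).const_mul |q|).exp
    refine ((((hu s hs).fun_pow 2).fun_add ((hv s hs).fun_pow 2)).fun_mul hexp).congr_deriv ?_
    field_simp
    ring
  have hanti : AntitoneOn F (Ici a) := by
    refine antitoneOn_of_hasDerivWithinAt_nonpos (convex_Ici a)
      (fun s hs => (hF s hs).continuousAt.continuousWithinAt)
      (fun s hs => (hF s (interior_subset hs)).hasDerivWithinAt) fun s hs => ?_
    have hq : 2 * q * (u s * v s) ≤ |q| * (u s ^ 2 + v s ^ 2) := by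
      nlinarith [abs_mul_abs_self q, abs_nonneg q, sq_nonneg (u s - v s), sq_nonneg (u s + v s),
        le_abs_self q, neg_abs_le q]
    exact mul_nonpos_of_nonneg_of_nonpos (by positivity) (sub_nonpos.mpr hq)
  calc u t ^ 2 ≤ (u t ^ 2 + v t ^ 2) * 1 := by nlinarith [sq_nonneg (v t)]
    _ ≤ F t := by
      apply mul_le_mul_of_nonneg_left _ (by positivity)
      exact Real.one_le_exp (div_nonneg (abs_nonneg q) (ha.trans_le ht).le)
    _ ≤ F a := hanti self_mem_Ici ht ht

theorem isBigO_rpow_neg_one_add_rpow_neg {μ : ℝ} (hμ : 0 ≤ μ) :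
    (fun t : ℝ => t ^ (-μ)) =O[𝓟 (Ici 1)] fun t => (1 + t) ^ (-μ) := by
  refine isBigO_principal.mpr ⟨2 ^ μ, fun t (ht : 1 ≤ t) => ?_⟩
  have ht₀ : 0 < t := by linarith
  rw [Real.norm_of_nonneg (by positivity), Real.norm_of_nonneg (by positivity),
    Real.rpow_neg ht₀.le, Real.rpow_neg (by positivity), ← Real.inv_rpow ht₀.le,
    ← Real.inv_rpow (by positivity), ← Real.mul_rpow (by norm_num) (by positivity)]
  gcongr
  rw [← div_eq_mul_inv, le_div_iff₀ (by positivity)]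
  field_simp
  linarith

theorem isBigO_one_add_rpow_neg_of_le {μ ν : ℝ} (h : μ ≤ ν) :
    (fun t : ℝ => (1 + t) ^ (-ν)) =O[𝓟 (Ici 0)] fun t => (1 + t) ^ (-μ) := by
  refine IsBigO.of_bound' (eventually_principal.mpr fun t (ht : 0 ≤ t) => ?_)
  rw [Real.norm_of_nonneg (by positivity), Real.norm_of_nonneg (by positivity)]
  exact Real.rpow_le_rpow_of_exponent_le (by linarith) (by linarith)

theorem Asymptotics.IsBigO.id_mul_of_one_add_rpow_neg {f : ℝ → ℝ} {μ : ℝ}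
    (hf : f =O[𝓟 (Ici 0)] fun t => (1 + t) ^ (-(μ + 1))) :
    (fun t => t * f t) =O[𝓟 (Ici 0)] fun t => (1 + t) ^ (-μ) := by
  have hid : (fun t : ℝ => t) =O[𝓟 (Ici 0)] fun t => 1 + t :=
    IsBigO.of_bound' (eventually_principal.mpr fun t (ht : 0 ≤ t) => by
      rw [Real.norm_of_nonneg ht, Real.norm_of_nonneg (by linarith)]; linarith)
  refine (hid.mul hf).congr' (Eventually.of_forall fun t => rfl) ?_
  filter_upwards [mem_principal_self _] with t (ht : 0 ≤ t)
  rw [show -μ = 1 + -(μ + 1) by ring, Real.rpow_add (by linarith), Real.rpow_one]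

def besselCoeff (lam : ℝ) (k : ℕ) : ℝ :=
  Real.Gamma (lam + 1) / (Nat.factorial k * Real.Gamma (k + lam + 1))

def besselSeries (lam x : ℝ) : ℝ := ∑' k, besselCoeff lam k * x ^ k

theorem besselSeries_eq_ofScalarsSum (lam : ℝ) :
    besselSeries lam = ofScalarsSum (besselCoeff lam) := by
  simp only [ofScalarsSum_eq_tsum, smul_eq_mul]
  rfl

theorem besselJNorm_eq_besselSeries (lam : ℝ) :
    besselJNorm lam = fun t => besselSeries lam (-(t ^ 2 / 4)) := by
  funext t
  rw [besselJNorm, besselSeries, ← tsum_mul_left]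
  refine tsum_congr fun k => ?_
  have hpow : (-(t ^ 2 / 4)) ^ k = (-1) ^ k * (t / 2) ^ (2 * k) := by
    rw [neg_pow, pow_mul]
    ring
  rw [besselCoeff, hpow]
  ring

section

variable {lam : ℝ}

theorem besselCoeff_pos (hlam : -1 < lam) (k : ℕ) : 0 < besselCoeff lam k := by
  have hk : 0 < (k : ℝ) + lam + 1 := by linarith [k.cast_nonneg (α := ℝ)]
  have := Real.Gamma_pos_of_pos hk
  have := Real.Gamma_pos_of_pos (neg_lt_iff_pos_add.mp hlam)
  unfold besselCoeff
  positivity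

theorem besselCoeff_zero (hlam : -1 < lam) : besselCoeff lam 0 = 1 := by
  have := Real.Gamma_pos_of_pos (neg_lt_iff_pos_add.mp hlam)
  simp [besselCoeff, this.ne']

theorem besselCoeff_succ (hlam : -1 < lam) (k : ℕ) :
    besselCoeff lam (k + 1) = besselCoeff lam k / ((k + 1) * (k + lam + 1)) := by
  have hk : 0 < (k : ℝ) + lam + 1 := by linarith [k.cast_nonneg (α := ℝ)]
  have hG := Real.Gamma_pos_of_pos hk
  rw [besselCoeff, besselCoeff, Nat.factorial_succ, Nat.cast_mul, Nat.cast_succ,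
    show (k : ℝ) + 1 + lam + 1 = (k + lam + 1) + 1 by ring, Real.Gamma_add_one hk.ne']
  field_simp

theorem radius_ofScalars_besselCoeff (hlam : -1 < lam) :
    (ofScalars ℝ (besselCoeff lam)).radius = ⊤ := by
  refine ofScalars_radius_eq_top_of_tendsto ℝ _
    (Eventually.of_forall fun k => (besselCoeff_pos hlam k).ne') ?_
  have hgrowth : Tendsto (fun k : ℕ => ((k : ℝ) + 1) * (k + lam + 1)) atTop atTop :=
    (tendsto_atTop_add_const_right _ 1 tendsto_natCast_atTop_atTop).atTop_mul_atTop₀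
      (tendsto_atTop_add_const_right _ 1
        (tendsto_atTop_add_const_right _ lam tendsto_natCast_atTop_atTop))
  refine (tendsto_inv_atTop_zero.comp hgrowth).congr fun k => ?_
  have hk := besselCoeff_pos hlam k
  rw [Real.norm_of_nonneg (besselCoeff_pos hlam _).le, Real.norm_of_nonneg hk.le,
    besselCoeff_succ hlam, div_div_cancel_left' hk.ne', Function.comp_apply]

theorem summable_besselCoeff_mul_pow (hlam : -1 < lam) (x : ℝ) :
    Summable fun k => besselCoeff lam k * x ^ k := by
  simpa [ofScalars_apply_eq, mul_comm] using (ofScalars ℝ (besselCoeff lam)).summable (x := x)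
    (by simp [radius_ofScalars_besselCoeff hlam])

theorem succ_mul_besselCoeff_succ (hlam : -1 < lam) (k : ℕ) :
    (k + 1) * besselCoeff lam (k + 1) = besselCoeff (lam + 1) k / (lam + 1) := by
  have hk : 0 < (k : ℝ) + lam + 1 := by linarith [k.cast_nonneg (α := ℝ)]
  have hl : 0 < lam + 1 := by linarith
  have := Real.Gamma_pos_of_pos hk
  have := Real.Gamma_pos_of_pos hl
  rw [besselCoeff_succ hlam, besselCoeff, besselCoeff, Real.Gamma_add_one hl.ne',
    show (k : ℝ) + (lam + 1) + 1 = (k + lam + 1) + 1 by ring, Real.Gamma_add_one hk.ne']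
  field_simp

theorem hasDerivAt_besselSeries (hlam : -1 < lam) (x : ℝ) :
    HasDerivAt (besselSeries lam) (besselSeries (lam + 1) x / (lam + 1)) x := by
  rw [besselSeries_eq_ofScalarsSum]
  refine (hasDerivAt_ofScalarsSum (radius_ofScalars_besselCoeff hlam) x).congr_deriv ?_
  rw [besselSeries, ofScalars_sum_eq, ← tsum_div_const]
  refine tsum_congr fun k => ?_
  rw [smul_eq_mul, succ_mul_besselCoeff_succ hlam]
  ring

theorem add_one_mul_besselCoeff_sub (hlam : -1 < lam) (k : ℕ) :
    (lam + 1) * (besselCoeff lam (k + 1) - besselCoeff (lam + 1) (k + 1)) =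
      besselCoeff (lam + 2) k / (lam + 2) := by
  have hk : 0 < (k : ℝ) + lam + 1 := by linarith [k.cast_nonneg (α := ℝ)]
  have hl : 0 < lam + 1 := by linarith
  have hGk := Real.Gamma_pos_of_pos hk
  have hGl := Real.Gamma_pos_of_pos hl
  have hA : Real.Gamma (lam + 1 + 1) = (lam + 1) * Real.Gamma (lam + 1) :=
    Real.Gamma_add_one hl.ne'
  have hB : Real.Gamma (lam + 2 + 1) = (lam + 2) * ((lam + 1) * Real.Gamma (lam + 1)) := by
    rw [show lam + 2 + 1 = lam + 1 + 1 + 1 by ring, Real.Gamma_add_one (by linarith), hA,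
      show lam + 1 + 1 = lam + 2 by ring]
  have hC : Real.Gamma (k + (lam + 1) + 1) = (k + lam + 1) * Real.Gamma (k + lam + 1) := by
    rw [show (k : ℝ) + (lam + 1) + 1 = k + lam + 1 + 1 by ring, Real.Gamma_add_one hk.ne']
  have hD : Real.Gamma (k + (lam + 2) + 1) =
      (k + lam + 2) * ((k + lam + 1) * Real.Gamma (k + lam + 1)) := by
    rw [show (k : ℝ) + (lam + 2) + 1 = k + (lam + 1) + 1 + 1 by ring,
      Real.Gamma_add_one (by linarith), hC]
    ring
  rw [besselCoeff_succ hlam, besselCoeff_succ (by linarith), besselCoeff, besselCoeff,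
    besselCoeff, hA, hB, hC, hD]
  have : (k : ℝ) + lam + 2 ≠ 0 := by linarith
  have : lam + 2 ≠ 0 := by linarith
  field_simp
  ring

theorem add_one_mul_besselSeries_sub (hlam : -1 < lam) (x : ℝ) :
    (lam + 1) * (besselSeries lam x - besselSeries (lam + 1) x) =
      x * besselSeries (lam + 2) x / (lam + 2) := by
  have h₀ := summable_besselCoeff_mul_pow hlam x
  have h₁ := summable_besselCoeff_mul_pow (lam := lam + 1) (by linarith) x
  rw [besselSeries, besselSeries, besselSeries, ← h₀.tsum_sub h₁, ← tsum_mul_left,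
    ((h₀.sub h₁).mul_left _).tsum_eq_zero_add, ← tsum_mul_left,
    ← tsum_div_const]
  simp only [besselCoeff_zero hlam, besselCoeff_zero (lam := lam + 1) (by linarith)]
  rw [sub_self, mul_zero, zero_add]
  refine tsum_congr fun k => ?_
  rw [← sub_mul, ← mul_assoc, add_one_mul_besselCoeff_sub hlam, pow_succ]
  ring

theorem contDiff_besselJNorm (hlam : -1 < lam) {n : WithTop ℕ∞} :
    ContDiff ℝ n (besselJNorm lam) := by
  have hF : AnalyticOnNhd ℝ (besselSeries lam) univ := by
    have := (hasFPowerSeriesOnBall_ofScalarsSum (radius_ofScalars_besselCoeff hlam)).analyticOnNhd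
    rwa [Metric.eball_top, ← besselSeries_eq_ofScalarsSum] at this
  rw [besselJNorm_eq_besselSeries]
  exact hF.contDiff.comp (by fun_prop)

theorem hasDerivAt_besselJNorm (hlam : -1 < lam) (t : ℝ) :
    HasDerivAt (besselJNorm lam) (-(t / (2 * (lam + 1))) * besselJNorm (lam + 1) t) t := by
  have hl : lam + 1 ≠ 0 := by linarith
  simp only [besselJNorm_eq_besselSeries]
  have hx : HasDerivAt (fun t : ℝ => -(t ^ 2 / 4)) (-(t / 2)) t := by
    refine ((hasDerivAt_pow 2 t).div_const 4).fun_neg.congr_deriv ?_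
    norm_num
    ring
  refine ((hasDerivAt_besselSeries hlam _).comp t hx).congr_deriv ?_
  field_simp

theorem besselJNorm_sub_besselJNorm_add_one (hlam : -1 < lam) (t : ℝ) :
    besselJNorm lam t - besselJNorm (lam + 1) t =
      -(t ^ 2 / (4 * (lam + 1) * (lam + 2))) * besselJNorm (lam + 2) t := by
  have hl : lam + 1 ≠ 0 := by linarith
  have hl' : lam + 2 ≠ 0 := by linarith
  have h := add_one_mul_besselSeries_sub hlam (-(t ^ 2 / 4))
  simp only [besselJNorm_eq_besselSeries]
  field_simp at h ⊢
  linear_combination h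

theorem isBigO_rpow_mul_besselJNorm (hlam : -1 < lam) :
    (fun t => t ^ (lam + 1 / 2) * besselJNorm lam t) =O[𝓟 (Ici 1)] fun _ => (1 : ℝ) := by
  set μ := lam + 1 / 2
  have hl : lam + 1 ≠ 0 := by linarith
  set u : ℝ → ℝ := fun s => s ^ μ * besselJNorm lam s
  set v : ℝ → ℝ := fun s =>
    s ^ μ * (μ / s * besselJNorm lam s - s / (2 * (lam + 1)) * besselJNorm (lam + 1) s)
  have hpow : ∀ s, 1 ≤ s → HasDerivAt (fun s => s ^ μ) (s ^ μ * (μ / s)) s := fun s hs =>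
    (Real.hasDerivAt_rpow_const (Or.inl (by positivity))).congr_deriv (by
      rw [Real.rpow_sub_one (by positivity)]; ring)
  have hu : ∀ s, 1 ≤ s → HasDerivAt u (v s) s := fun s hs =>
    ((hpow s hs).fun_mul (hasDerivAt_besselJNorm hlam s)).congr_deriv (by
      simp only [v]; ring)
  -- `v = u'`; the term with `j_{λ+2}` in `v'` cancels by the contiguous relation `hrec`.
  have hv : ∀ s, 1 ≤ s → HasDerivAt v ((μ * (μ - 1) / s ^ 2 - 1) * u s) s := by
    intro s hs
    have hs₀ : s ≠ 0 := by positivity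
    have hj := hasDerivAt_besselJNorm hlam s
    have hj₁ := hasDerivAt_besselJNorm (lam := lam + 1) (by linarith) s
    rw [show lam + 1 + 1 = lam + 2 by ring] at hj₁
    have hrec := besselJNorm_sub_besselJNorm_add_one hlam s
    field_simp at hrec
    refine ((hpow s hs).fun_mul ((((hasDerivAt_inv hs₀).const_mul μ).fun_mul hj).fun_sub
      (((hasDerivAt_id s).div_const (2 * (lam + 1))).fun_mul hj₁))).congr_deriv ?_
    simp only [u, μ, id_eq]
    field_simp
    linear_combination s ^ 2 * hrec
  refine isBigO_principal.mpr
    ⟨√((u 1 ^ 2 + v 1 ^ 2) * Real.exp (|μ * (μ - 1)| / 1)), fun t ht => ?_⟩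
  simpa using Real.abs_le_sqrt (sq_le_of_perturbed_oscillator one_pos hu hv ht)

theorem isBigO_besselJNorm (hlam : -(1 / 2) ≤ lam) :
    besselJNorm lam =O[𝓟 (Ici 0)] fun t => (1 + t) ^ (-(lam + 1 / 2)) := by
  have hcont : Continuous (besselJNorm lam) :=
    (contDiff_besselJNorm (by linarith) (n := 0)).continuous
  rw [← Icc_union_Ici_eq_Ici zero_le_one, ← sup_principal]
  refine .sup ?_ ?_
  · refine (hcont.continuousOn.isBigO_principal isCompact_Icc (c := (1 : ℝ)) (by norm_num)).trans
      (ContinuousOn.isBigO_rev_principal ?_ isCompact_Icc (fun t ht => ?_) (1 : ℝ))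
    · exact fun t ht => ((continuousAt_const.fun_add continuousAt_id).rpow_const
        (Or.inl (by simp only [id_eq]; linarith [ht.1]))).continuousWithinAt
    · exact (Real.rpow_pos_of_pos (by linarith [ht.1]) _).ne'
  · have hdecay := (isBigO_rpow_neg_one_add_rpow_neg (μ := lam + 1 / 2) (by linarith)).mul
      (isBigO_rpow_mul_besselJNorm (lam := lam) (by linarith))
    refine hdecay.congr' ?_ (Eventually.of_forall fun t => mul_one _)
    filter_upwards [mem_principal_self _] with t (ht : 1 ≤ t)
    rw [← mul_assoc, ← Real.rpow_add (by linarith), neg_add_cancel, Real.rpow_zero, one_mul]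

theorem iteratedDeriv_succ_besselJNorm (hlam : -1 < lam) (n : ℕ) (t : ℝ) :
    iteratedDeriv (n + 1) (besselJNorm lam) t =
      -(2 * (lam + 1))⁻¹ * (t * iteratedDeriv n (besselJNorm (lam + 1)) t +
        n * iteratedDeriv (n - 1) (besselJNorm (lam + 1)) t) := by
  have hderiv :
      deriv (besselJNorm lam) = fun s => -(2 * (lam + 1))⁻¹ * (s * besselJNorm (lam + 1) s) :=
    funext fun s => (hasDerivAt_besselJNorm hlam s).deriv.trans (by ring)
  rw [iteratedDeriv_succ', hderiv, iteratedDeriv_const_mul_field,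
    iteratedDeriv_fun_id_mul (contDiff_besselJNorm (by linarith))]

theorem isBigO_iteratedDeriv_besselJNorm (hlam : -(1 / 2) ≤ lam) (n : ℕ) :
    iteratedDeriv n (besselJNorm lam) =O[𝓟 (Ici 0)] fun t => (1 + t) ^ (-(lam + 1 / 2)) := by
  induction n using Nat.strong_induction_on generalizing lam with
  | _ n ih =>
    rcases n with _ | m
    · simpa using isBigO_besselJNorm hlam
    have hshift : ∀ k < m + 1, iteratedDeriv k (besselJNorm (lam + 1)) =O[𝓟 (Ici 0)]
        fun t => (1 + t) ^ (-((lam + 1 / 2) + 1)) := fun k hk => by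
      simpa only [show lam + 1 + 1 / 2 = lam + 1 / 2 + 1 by ring] using
        ih k hk (lam := lam + 1) (by linarith)
    have hfirst := (hshift m m.lt_succ_self).id_mul_of_one_add_rpow_neg
    have hsecond := ((hshift (m - 1) (by omega)).trans
      (isBigO_one_add_rpow_neg_of_le (μ := lam + 1 / 2) (by linarith))).const_mul_left (m : ℝ)
    exact ((hfirst.add hsecond).const_mul_left _).congr_left fun t =>
      (iteratedDeriv_succ_besselJNorm (by linarith) m t).symm

end

/-- For every `λ ≥ −1/2` and `n ∈ ℕ` there is `C = C(λ,n)` with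
`|j_λ^{(n)}(t)| ≤ C (1+t)^{−(λ+1/2)}` for all `t ≥ 0`. -/
theorem stmt1 (lam : ℝ) (hlam : -(1 / 2 : ℝ) ≤ lam) (n : ℕ) :
    ∃ C : ℝ, 0 < C ∧ ∀ t : ℝ, 0 ≤ t →
      |iteratedDeriv n (besselJNorm lam) t| ≤ C * (1 + t) ^ (-(lam + 1 / 2)) := by
  obtain ⟨C, hC, hbound⟩ := (isBigO_iteratedDeriv_besselJNorm hlam n).exists_pos
  refine ⟨C, hC, fun t ht => ?_⟩
  have := isBigOWith_principal.mp hbound t ht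
  rwa [Real.norm_eq_abs, Real.norm_of_nonneg (Real.rpow_pos_of_pos (by linarith) _).le] at this
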